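/- Let p be an odd prime, τ = −e^{iπ/p} (so τ^p = 1), and let α, β, γ, δ ∈ Z_p with αδ − βγ = 1, β ≠ 0, and α + δ ≠ 2 in Z_p. Define the p×p matrix V_F with entries (V_F)_{r,s} = p^{−1/2} τ^{n(r,s)} for r, s ∈ Z_p, where n(r,s) is any integer congruent modulo p to β⁻¹(α s² − 2 r s + δ r²) (β⁻¹ the inverse of β in Z_p). Then |tr(V_F)| = 1. -/

import Mathlib

/-!
On the diagonal `r = s` the exponent collapses to `c r²` with `c = β⁻¹ (α + δ - 2) ≠ 0`, so
`√p · tr V_F` is the quadratic Gauss sum `S = ∑ₓ ψ (c x²)` of the additive character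
`ψ a = τ ^ a`, which is primitive because `τ` is a primitive `p`-th root of unity.
Substituting `x = y + d` in `S · conj S = ∑_{x,y} ψ (c x² - c y²)` turns the inner sum over `y`
into the character sum `∑_y ψ (2 c d y)`, which vanishes unless `d = 0`; hence `|S|² = p`.
-/

noncomputable section

open Complex Matrix

/-- `τ = −e^{iπ/p}` (a primitive `p`-th root of unity for odd `p`). -/
def τc (p : ℕ) : ℂ := -Complex.exp ((Real.pi : ℂ) * Complex.I / (p : ℂ))

/-- The Clifford-group unitary `V_F` (up to phase) associated with
`F = [[α, β], [γ, δ]] ∈ SL(2, Z_p)` with `β ≠ 0`: entries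
`(V_F)_{r,s} = p^{−1/2} τ^{β⁻¹(α s² − 2 r s + δ r²)}`.  Since `τ^p = 1` for odd `p`, the
exponent may be taken to be any integer congruent to `β⁻¹(α s² − 2 r s + δ r²)` mod `p`;
we use the canonical representative `ZMod.val`. -/
def VF (p : ℕ) (α β γ δ : ZMod p) : Matrix (Fin p) (Fin p) ℂ :=
  Matrix.of fun r s : Fin p =>
    (1 / (Real.sqrt p : ℂ)) *
      τc p ^ (β⁻¹ * (α * ((s : ℕ) : ZMod p) ^ 2 - 2 * ((r : ℕ) : ZMod p) * ((s : ℕ) : ZMod p)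
          + δ * ((r : ℕ) : ZMod p) ^ 2)).val

namespace AddChar

variable {R K : Type*} [CommRing R] [Fintype R] [RCLike K]

open ComplexConjugate

theorem sum_apply_mul_sq_mul_conj {ψ : AddChar R K} (hψ : ψ.IsPrimitive) {c : R}
    (h2c : IsUnit (2 * c)) :
    (∑ x, ψ (c * x ^ 2)) * conj (∑ x, ψ (c * x ^ 2)) = Fintype.card R := by
  classical
  calc (∑ x, ψ (c * x ^ 2)) * conj (∑ x, ψ (c * x ^ 2))
      = ∑ y, ∑ x, ψ (c * x ^ 2 - c * y ^ 2) := by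
        simp only [map_sum, ← map_neg_eq_conj, Finset.sum_mul_sum, sub_eq_add_neg,
          map_add_eq_mul]
        exact Finset.sum_comm
    _ = ∑ y, ∑ d, ψ (c * d ^ 2) * ψ (y * (2 * c * d)) := by
        refine Finset.sum_congr rfl fun y _ => ?_
        refine (Fintype.sum_equiv (Equiv.addLeft y) _ _ fun d => ?_).symm
        rw [← map_add_eq_mul, Equiv.coe_addLeft]
        congr 1
        ring
    _ = ∑ d, ψ (c * d ^ 2) * ∑ y, ψ (y * (2 * c * d)) := by
        rw [Finset.sum_comm]
        simp only [Finset.mul_sum]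
    _ = Fintype.card R := by
        simp only [sum_mulShift _ hψ, h2c.mul_right_eq_zero]
        simp

theorem norm_sum_apply_mul_sq {ψ : AddChar R K} (hψ : ψ.IsPrimitive) {c : R}
    (h2c : IsUnit (2 * c)) :
    ‖∑ x, ψ (c * x ^ 2)‖ = √(Fintype.card R) := by
  have h := sum_apply_mul_sq_mul_conj hψ h2c
  rw [RCLike.mul_conj] at h
  rw [← Real.sqrt_sq (norm_nonneg _)]
  exact congrArg Real.sqrt (mod_cast h)

end AddChar

theorem isPrimitiveRoot_τc {p : ℕ} (hp : Odd p) : IsPrimitiveRoot (τc p) p := by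
  obtain ⟨m, rfl⟩ := hp
  -- `τ = exp (2πi (m + 1) / (2m + 1))`, as `2 (m + 1) = (2m + 1) + 1`.
  have hcop : (m + 1).Coprime (2 * m + 1) := by
    rw [← Nat.isCoprime_iff_coprime]
    exact ⟨2, -1, by push_cast; ring⟩
  convert isPrimitiveRoot_exp_of_coprime (m + 1) (2 * m + 1) (by omega) hcop using 1
  have : (2 * m + 1 : ℂ) ≠ 0 := by exact_mod_cast (by omega : 2 * m + 1 ≠ 0)
  rw [τc, ← mul_neg_one, ← exp_pi_mul_I, ← exp_add]
  congr 1
  push_cast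
  field_simp
  ring

theorem ZMod.sum_fin_natCast {M : Type*} [AddCommMonoid M] (n : ℕ) [NeZero n]
    (f : ZMod n → M) :
    ∑ i : Fin n, f (i : ℕ) = ∑ x, f x := by
  obtain ⟨m, rfl⟩ : ∃ m, n = m + 1 := Nat.exists_eq_succ_of_ne_zero (NeZero.ne n)
  exact Fintype.sum_equiv (Equiv.refl _) _ _ fun i => congrArg f (Fin.cast_val_eq_self i)

theorem trace_VF (p : ℕ) [NeZero p] (α β γ δ : ZMod p) :
    trace (VF p α β γ δ) =
      (1 / (√p : ℂ)) * ∑ x : ZMod p, τc p ^ (β⁻¹ * (α + δ - 2) * x ^ 2).val := by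
  rw [← ZMod.sum_fin_natCast, Finset.mul_sum]
  refine Finset.sum_congr rfl fun i _ => ?_
  simp only [diag_apply, VF, of_apply]
  congr 3
  ring

theorem abs_trace_VF_eq_one_general (p : ℕ) (hp : p.Prime) (hodd : Odd p)
    (α β γ δ : ZMod p) (hβ : β ≠ 0) (htr : α + δ ≠ 2) :
    ‖Matrix.trace (VF p α β γ δ)‖ = 1 := by
  have : Fact p.Prime := ⟨hp⟩
  have hψ := AddChar.zmodChar_primitive_of_primitive_root p (isPrimitiveRoot_τc hodd)
  have h2 : (2 : ZMod p) ≠ 0 := Ring.two_ne_zero <| by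
    rw [ZMod.ringChar_zmod_n]
    rintro rfl
    exact absurd hodd (by decide)
  have hc : β⁻¹ * (α + δ - 2) ≠ 0 := mul_ne_zero (inv_ne_zero hβ) (sub_ne_zero.2 htr)
  rw [trace_VF, norm_mul]
  simp only [← AddChar.zmodChar_apply (isPrimitiveRoot_τc hodd).pow_eq_one]
  rw [AddChar.norm_sum_apply_mul_sq hψ (isUnit_iff_ne_zero.2 (mul_ne_zero h2 hc)), ZMod.card]
  have hsqrt : (0 : ℝ) < √p := Real.sqrt_pos.2 (by exact_mod_cast hp.pos)
  simp [abs_of_pos hsqrt, hsqrt.ne']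

/-- For an odd prime `p` and `F = [[α, β], [γ, δ]] ∈ SL(2, Z_p)` with
`β ≠ 0` and `α + δ ≠ 2`, the associated Clifford unitary satisfies `|tr(V_F)| = 1`. -/
theorem abs_trace_VF_eq_one (p : ℕ) (hp : p.Prime) (hodd : Odd p)
    (α β γ δ : ZMod p) (hdet : α * δ - β * γ = 1) (hβ : β ≠ 0) (htr : α + δ ≠ 2) :
    ‖Matrix.trace (VF p α β γ δ)‖ = 1 :=
  abs_trace_VF_eq_one_general p hp hodd α β γ δ hβ htr
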